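/- arXiv:1912.01445 — 5 statements merged into one kernel-verified Lean document; each statement's English description precedes it below -/
import Mathlib

section
/- For every nonnegative integer k, the sum over j from 0 to k of binom(2j,j)*binom(2k-2j,k-j)*j*(k-j) equals 4^k * k * (k-1) / 8. -/
/-!
Write `c j` for the central binomial coefficient. The recursion `(j + 1) c (j + 1) = 2 (2j + 1) c j`
turns the weight `j` on the first factor of a convolution at level `n + 1` into the weight `4j + 2`
at level `n`, and the symmetry `j ↔ n - j` turns the weight `j` into `n / 2`. Together they give
`∑ c j c (n - j) = 4 ^ n`, `2 ∑ j c j c (n - j) = n 4 ^ n`, and for `S n = ∑ j (n - j) c j c (n - j)`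
the recursion `S (n + 1) = 4 S n + n 4 ^ n`, whence `8 S n = 4 ^ n n (n - 1)`.
-/

open Finset Finset.Nat

namespace Finset.Nat

theorem two_mul_sum_antidiagonal_fst_mul (f : ℕ → ℕ) (n : ℕ) :
    2 * ∑ p ∈ antidiagonal n, p.1 * (f p.1 * f p.2) = n * ∑ p ∈ antidiagonal n, f p.1 * f p.2 := by
  have hswap : ∑ p ∈ antidiagonal n, p.1 * (f p.1 * f p.2)
      = ∑ p ∈ antidiagonal n, p.2 * (f p.1 * f p.2) := by
    rw [← sum_antidiagonal_swap]
    simp only [Prod.fst_swap, Prod.snd_swap, mul_comm (f _) (f _)]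
  rw [two_mul]
  nth_rw 2 [hswap]
  rw [← sum_add_distrib, mul_sum]
  refine sum_congr rfl fun p hp => ?_
  rw [← add_mul, mem_antidiagonal.mp hp]

end Finset.Nat

namespace Nat

theorem sum_antidiagonal_succ_fst_mul_centralBinom (g : ℕ → ℕ) (n : ℕ) :
    ∑ p ∈ antidiagonal (n + 1), p.1 * (centralBinom p.1 * g p.2)
      = 4 * ∑ p ∈ antidiagonal n, p.1 * (centralBinom p.1 * g p.2)
        + 2 * ∑ p ∈ antidiagonal n, centralBinom p.1 * g p.2 := by
  simp only [sum_antidiagonal_succ, zero_mul, zero_add, ← mul_assoc, succ_mul_centralBinom_succ,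
    mul_sum, ← sum_add_distrib]
  exact sum_congr rfl fun p _ => by ring

theorem sum_antidiagonal_centralBinom_mul_centralBinom (n : ℕ) :
    ∑ p ∈ antidiagonal n, centralBinom p.1 * centralBinom p.2 = 4 ^ n := by
  induction n with
  | zero => simp
  | succ n ih =>
    have hS1 := two_mul_sum_antidiagonal_fst_mul centralBinom n
    refine Nat.eq_of_mul_eq_mul_left (by omega : 0 < n + 1) ?_
    rw [← two_mul_sum_antidiagonal_fst_mul, sum_antidiagonal_succ_fst_mul_centralBinom]
    linear_combination 4 * hS1 + (4 * n + 4) * ih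

theorem two_mul_sum_antidiagonal_fst_mul_centralBinom_mul_centralBinom (n : ℕ) :
    2 * ∑ p ∈ antidiagonal n, p.1 * (centralBinom p.1 * centralBinom p.2) = n * 4 ^ n := by
  rw [two_mul_sum_antidiagonal_fst_mul, sum_antidiagonal_centralBinom_mul_centralBinom]

theorem eight_mul_sum_antidiagonal_mul_mul_centralBinom_mul_centralBinom (n : ℕ) :
    8 * ∑ p ∈ antidiagonal n, p.1 * p.2 * (centralBinom p.1 * centralBinom p.2)
      = 4 ^ n * n * (n - 1) := by
  have hshape (m : ℕ) : ∑ p ∈ antidiagonal m, p.1 * p.2 * (centralBinom p.1 * centralBinom p.2)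
      = ∑ p ∈ antidiagonal m, p.1 * (centralBinom p.1 * (p.2 * centralBinom p.2)) :=
    sum_congr rfl fun p _ => by ring
  induction n with
  | zero => simp
  | succ n ih =>
    have hswap : ∑ p ∈ antidiagonal n, centralBinom p.1 * (p.2 * centralBinom p.2)
        = ∑ p ∈ antidiagonal n, p.1 * (centralBinom p.1 * centralBinom p.2) := by
      rw [← sum_antidiagonal_swap]
      exact sum_congr rfl fun p _ => by simp only [Prod.fst_swap, Prod.snd_swap]; ring
    have hS1 := two_mul_sum_antidiagonal_fst_mul_centralBinom_mul_centralBinom n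
    rw [hshape] at ih ⊢
    rw [sum_antidiagonal_succ_fst_mul_centralBinom (fun m => m * centralBinom m), hswap]
    rcases n with _ | n
    · simp
    · simp only [Nat.add_sub_cancel] at ih ⊢
      linear_combination 4 * ih + 8 * hS1

end Nat

theorem stmt_1 (k : ℕ) :
    (∑ j ∈ Finset.range (k + 1),
      ((2 * j).choose j : ℚ) * (2 * (k - j)).choose (k - j) * j * (k - j : ℕ))
      = 4 ^ k * k * (k - 1 : ℕ) / 8 := by
  have hcast : (∑ j ∈ Finset.range (k + 1),
      ((2 * j).choose j : ℚ) * (2 * (k - j)).choose (k - j) * j * (k - j : ℕ))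
      = ((∑ j ∈ range (k + 1), j * (k - j) * (j.centralBinom * (k - j).centralBinom) : ℕ) : ℚ) := by
    push_cast
    exact sum_congr rfl fun j _ => by simp only [Nat.centralBinom_eq_two_mul_choose]; ring
  have h := Nat.eight_mul_sum_antidiagonal_mul_mul_centralBinom_mul_centralBinom k
  rw [sum_antidiagonal_eq_sum_range_succ (fun i j => i * j * (i.centralBinom * j.centralBinom))] at h
  rw [hcast, eq_div_iff (by norm_num), mul_comm]
  exact_mod_cast h
end

section
/- For every positive integer n, the sum over k from 0 to n-1 of (-1/8)^k * (sum over j from 0 to k of binom(2j,j)*binom(2k-2j,k-j)*(6j+1)*(6k-6j+1)) equals (-1/2)^n * n * (1 - 3n). -/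
/-!
Write `c j` for the central binomial coefficient `(2j choose j)`. The inner sum is a convolution
over `i + j = k`. On the antidiagonal `(6i+1)(6j+1) = 36 ij + 6k + 1`, so it suffices to know
`∑ c_i c_j = 4^k` and `∑ i c_i · j c_j = k(k-1) 4^k / 8`. Both follow by induction on `k` from
`(j+1) c_{j+1} = 4 · j c_j + 2 c_j` together with the symmetry `i ↔ j`, which gives
`2 ∑ i c_i c_j = k ∑ c_i c_j`. The inner sum is then `4^k (9k² + 3k + 2) / 2`, the factor `4^k`
cancels against `(-1/8)^k`, and the remaining sum telescopes.
-/

open Finset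

namespace CentralBinomConvolution

theorem two_mul_sum_antidiagonal_fst_mul {R : Type*} [CommSemiring R] (f : ℕ → R) (k : ℕ) :
    2 * ∑ p ∈ antidiagonal k, (p.1 : R) * (f p.1 * f p.2) =
      k * ∑ p ∈ antidiagonal k, f p.1 * f p.2 := by
  conv_lhs => rw [two_mul]; arg 2; rw [← Nat.sum_antidiagonal_swap]
  rw [← sum_add_distrib, mul_sum]
  refine sum_congr rfl fun p hp => ?_
  rw [HasAntidiagonal.mem_antidiagonal] at hp
  simp only [Prod.fst_swap, Prod.snd_swap, ← hp, Nat.cast_add]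
  ring

theorem succ_mul_cast_centralBinom_succ (j : ℕ) :
    ((j + 1 : ℕ) : ℚ) * (j + 1).centralBinom = 4 * (j * j.centralBinom) + 2 * j.centralBinom := by
  have h := congrArg (Nat.cast : ℕ → ℚ) (Nat.succ_mul_centralBinom_succ j)
  push_cast at h ⊢
  linear_combination h

theorem sum_antidiagonal_succ_fst_mul_centralBinom (g : ℕ → ℚ) (k : ℕ) :
    ∑ p ∈ antidiagonal (k + 1), p.1 * (p.1.centralBinom : ℚ) * g p.2 =
      4 * ∑ p ∈ antidiagonal k, p.1 * (p.1.centralBinom : ℚ) * g p.2 +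
        2 * ∑ p ∈ antidiagonal k, (p.1.centralBinom : ℚ) * g p.2 := by
  rw [Nat.sum_antidiagonal_succ, mul_sum, mul_sum, ← sum_add_distrib]
  simp only [succ_mul_cast_centralBinom_succ, Nat.cast_zero, zero_mul, zero_add]
  exact sum_congr rfl fun p _ => by ring

theorem sum_antidiagonal_centralBinom_mul (k : ℕ) :
    ∑ p ∈ antidiagonal k, (p.1.centralBinom : ℚ) * p.2.centralBinom = 4 ^ k := by
  induction k with
  | zero => simp
  | succ k ih =>
    have hsymm := two_mul_sum_antidiagonal_fst_mul (fun j => (j.centralBinom : ℚ)) (k + 1)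
    have hsymm' := two_mul_sum_antidiagonal_fst_mul (fun j => (j.centralBinom : ℚ)) k
    simp only [← mul_assoc] at hsymm hsymm'
    rw [sum_antidiagonal_succ_fst_mul_centralBinom (fun j => (j.centralBinom : ℚ)), ih] at hsymm
    rw [ih] at hsymm'
    have hk : ((k + 1 : ℕ) : ℚ) ≠ 0 := by positivity
    apply mul_left_cancel₀ hk
    rw [← hsymm]
    push_cast
    linear_combination 4 * hsymm'

theorem sum_antidiagonal_fst_mul_centralBinom_mul (k : ℕ) :
    ∑ p ∈ antidiagonal k, p.1 * (p.1.centralBinom : ℚ) * p.2.centralBinom = k * 4 ^ k / 2 := by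
  have h := two_mul_sum_antidiagonal_fst_mul (fun j => (j.centralBinom : ℚ)) k
  simp only [← mul_assoc] at h
  rw [sum_antidiagonal_centralBinom_mul] at h
  linear_combination h / 2

theorem sum_antidiagonal_fst_mul_centralBinom_mul_snd_mul_centralBinom (k : ℕ) :
    ∑ p ∈ antidiagonal k, p.1 * (p.1.centralBinom : ℚ) * (p.2 * p.2.centralBinom) =
      k * (k - 1) * 4 ^ k / 8 := by
  induction k with
  | zero => simp
  | succ k ih =>
    have hswap : ∑ p ∈ antidiagonal k, (p.1.centralBinom : ℚ) * (p.2 * p.2.centralBinom) =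
        k * 4 ^ k / 2 := by
      rw [← sum_antidiagonal_fst_mul_centralBinom_mul, ← Nat.sum_antidiagonal_swap]
      exact sum_congr rfl fun p _ => by simp only [Prod.fst_swap, Prod.snd_swap]; ring
    rw [sum_antidiagonal_succ_fst_mul_centralBinom (fun j => j * (j.centralBinom : ℚ)), ih, hswap]
    push_cast
    ring

theorem sum_antidiagonal_centralBinom_mul_six_mul_add_one (k : ℕ) :
    ∑ p ∈ antidiagonal k,
        (p.1.centralBinom : ℚ) * p.2.centralBinom * (6 * p.1 + 1) * (6 * p.2 + 1) =
      4 ^ k * (9 * k ^ 2 + 3 * k + 2) / 2 := by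
  have hsplit : ∀ p ∈ antidiagonal k,
      (p.1.centralBinom : ℚ) * p.2.centralBinom * (6 * p.1 + 1) * (6 * p.2 + 1) =
        36 * (p.1 * (p.1.centralBinom : ℚ) * (p.2 * p.2.centralBinom)) +
          (6 * k + 1) * ((p.1.centralBinom : ℚ) * p.2.centralBinom) := by
    intro p hp
    rw [HasAntidiagonal.mem_antidiagonal] at hp
    rw [← hp, Nat.cast_add]
    ring
  rw [sum_congr rfl hsplit, sum_add_distrib, ← mul_sum, ← mul_sum,
    sum_antidiagonal_fst_mul_centralBinom_mul_snd_mul_centralBinom,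
    sum_antidiagonal_centralBinom_mul]
  ring

end CentralBinomConvolution

open CentralBinomConvolution

theorem sum_range_neg_half_pow_mul (n : ℕ) :
    ∑ k ∈ range n, (-1 / 2 : ℚ) ^ k * ((9 * k ^ 2 + 3 * k + 2) / 2) =
      (-1 / 2 : ℚ) ^ n * n * (1 - 3 * n) := by
  induction n with
  | zero => simp
  | succ n ih =>
    rw [sum_range_succ, ih]
    push_cast
    ring

theorem stmt_3_general (n : ℕ) :
    (∑ k ∈ Finset.range n, (-1 / 8 : ℚ) ^ k *
      ∑ j ∈ Finset.range (k + 1),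
        ((2 * j).choose j : ℚ) * (2 * (k - j)).choose (k - j) * (6 * j + 1) * (6 * (k - j : ℕ) + 1))
      = (-1 / 2 : ℚ) ^ n * n * (1 - 3 * n) := by
  rw [← sum_range_neg_half_pow_mul]
  refine sum_congr rfl fun k _ => ?_
  have hinner := sum_antidiagonal_centralBinom_mul_six_mul_add_one k
  rw [Nat.sum_antidiagonal_eq_sum_range_succ
    (fun i j => (i.centralBinom : ℚ) * j.centralBinom * (6 * i + 1) * (6 * j + 1))] at hinner
  simp only [Nat.centralBinom_eq_two_mul_choose] at hinner
  rw [hinner, mul_div_assoc, ← mul_assoc, ← mul_pow]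
  norm_num

theorem stmt_3 (n : ℕ) (hn : 0 < n) :
    (∑ k ∈ Finset.range n, (-1 / 8 : ℚ) ^ k *
      ∑ j ∈ Finset.range (k + 1),
        ((2 * j).choose j : ℚ) * (2 * (k - j)).choose (k - j) * (6 * j + 1) * (6 * (k - j : ℕ) + 1))
      = (-1 / 2 : ℚ) ^ n * n * (1 - 3 * n) :=
  stmt_3_general n
end

section
/- For every positive integer n, the sum over k from 0 to n-1 of (1/4)^k * (sum over j from 0 to k of binom(2j,j)*binom(2k-2j,k-j)*(6j+1)*(6k-6j+1)) equals n*(3n^2 - 3n + 2)/2. -/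
/-!
With `s n = C(2n, n) / 4 ^ n` (the coefficients of `(1 - x)^(-1/2)`) one has
`(n + 1) s (n + 1) = (n + 1/2) s n`. This recursion turns a convolution `∑_{i+l=k+1} i f(i,l) s_i s_l`
into one of length `k`; together with the symmetry `i ↔ l` it gives `∑_{i+l=k} s_i s_l = 1`,
`∑ i s_i s_l = k/2` and `∑ i l s_i s_l = k(k-1)/8`. As `(6i+1)(6l+1) = 36 i l + 6k + 1`, the `k`-th
summand equals `(9k² + 3k + 2)/2`, and summing this quadratic gives the cubic.
-/

open Finset Nat

noncomputable def scaledCentralBinom (n : ℕ) : ℚ := (centralBinom n : ℚ) / 4 ^ n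

local notation "s" => scaledCentralBinom

lemma succ_mul_scaledCentralBinom_succ (n : ℕ) :
    ((n : ℚ) + 1) * s (n + 1) = ((n : ℚ) + 1 / 2) * s n := by
  have h : ((n : ℚ) + 1) * centralBinom (n + 1) = 2 * (2 * n + 1) * centralBinom n := by
    exact_mod_cast succ_mul_centralBinom_succ n
  simp only [scaledCentralBinom, pow_succ, ← mul_div_assoc, h]
  field_simp
  ring

lemma two_mul_sum_antidiagonal_fst_mul {R : Type*} [CommSemiring R] (g : ℕ → R) (k : ℕ) :
    2 * ∑ p ∈ antidiagonal k, (p.1 : R) * (g p.1 * g p.2)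
      = k * ∑ p ∈ antidiagonal k, g p.1 * g p.2 := by
  have hswap : ∑ p ∈ antidiagonal k, (p.1 : R) * (g p.1 * g p.2)
      = ∑ p ∈ antidiagonal k, (p.2 : R) * (g p.1 * g p.2) := by
    rw [← Nat.sum_antidiagonal_swap]
    exact sum_congr rfl fun p _ ↦ by simp only [Prod.fst_swap, Prod.snd_swap, mul_comm (g p.2)]
  rw [two_mul]
  nth_rewrite 2 [hswap]
  rw [← sum_add_distrib, mul_sum]
  refine sum_congr rfl fun p hp ↦ ?_
  rw [← (mem_antidiagonal.mp hp)]
  push_cast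
  ring

lemma sum_antidiagonal_succ_fst_mul (f : ℕ → ℕ → ℚ) (k : ℕ) :
    ∑ p ∈ antidiagonal (k + 1), (p.1 : ℚ) * f p.1 p.2 * (s p.1 * s p.2)
      = ∑ p ∈ antidiagonal k, ((p.1 : ℚ) + 1 / 2) * f (p.1 + 1) p.2 * (s p.1 * s p.2) := by
  rw [Nat.sum_antidiagonal_succ]
  simp only [CharP.cast_eq_zero, zero_mul, zero_add]
  refine sum_congr rfl fun p _ ↦ ?_
  push_cast
  linear_combination (f (p.1 + 1) p.2 * s p.2) * succ_mul_scaledCentralBinom_succ p.1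

theorem sum_antidiagonal_scaledCentralBinom (k : ℕ) :
    ∑ p ∈ antidiagonal k, s p.1 * s p.2 = 1 := by
  induction k with
  | zero => simp [scaledCentralBinom]
  | succ k ih =>
    have hshift : ∑ p ∈ antidiagonal (k + 1), (p.1 : ℚ) * (s p.1 * s p.2)
        = ∑ p ∈ antidiagonal k, (p.1 : ℚ) * (s p.1 * s p.2) + 1 / 2 := by
      simpa only [mul_one, add_mul, sum_add_distrib, ← mul_sum, ih]
        using sum_antidiagonal_succ_fst_mul (fun _ _ ↦ 1) k
    have hk := two_mul_sum_antidiagonal_fst_mul s k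
    have hk1 := two_mul_sum_antidiagonal_fst_mul s (k + 1)
    rw [ih] at hk
    rw [hshift] at hk1
    push_cast at hk1
    apply mul_left_cancel₀ (by positivity : (k : ℚ) + 1 ≠ 0)
    linear_combination -hk1 + hk

lemma sum_antidiagonal_fst_mul_scaledCentralBinom (k : ℕ) :
    ∑ p ∈ antidiagonal k, (p.1 : ℚ) * (s p.1 * s p.2) = k / 2 := by
  have h := two_mul_sum_antidiagonal_fst_mul s k
  rw [sum_antidiagonal_scaledCentralBinom] at h
  linarith

lemma sum_antidiagonal_fst_mul_snd_mul_scaledCentralBinom (k : ℕ) :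
    ∑ p ∈ antidiagonal k, (p.1 : ℚ) * p.2 * (s p.1 * s p.2) = k * (k - 1) / 8 := by
  induction k with
  | zero => simp
  | succ k ih =>
    rw [sum_antidiagonal_succ_fst_mul (fun _ l ↦ (l : ℚ)) k]
    have hsnd : ∑ p ∈ antidiagonal k, (p.2 : ℚ) * (s p.1 * s p.2) = k / 2 := by
      rw [← sum_antidiagonal_fst_mul_scaledCentralBinom k, ← Nat.sum_antidiagonal_swap]
      exact sum_congr rfl fun p _ ↦ by simp only [Prod.fst_swap, Prod.snd_swap, mul_comm (s p.2)]
    have hsplit : ∀ p ∈ antidiagonal k, ((p.1 : ℚ) + 1 / 2) * p.2 * (s p.1 * s p.2)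
        = (p.1 : ℚ) * p.2 * (s p.1 * s p.2) + 1 / 2 * ((p.2 : ℚ) * (s p.1 * s p.2)) :=
      fun p _ ↦ by ring
    rw [sum_congr rfl hsplit, sum_add_distrib, ← mul_sum, ih, hsnd]
    push_cast
    ring

lemma quarter_pow_mul_sum_choose_mul_eq (k : ℕ) :
    (1 / 4 : ℚ) ^ k * ∑ j ∈ range (k + 1),
        ((2 * j).choose j : ℚ) * (2 * (k - j)).choose (k - j) * (6 * j + 1) * (6 * (k - j : ℕ) + 1)
      = (9 * k ^ 2 + 3 * k + 2) / 2 := by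
  rw [← Nat.sum_antidiagonal_eq_sum_range_succ
    (fun i l ↦ ((2 * i).choose i : ℚ) * (2 * l).choose l * (6 * i + 1) * (6 * l + 1)), mul_sum]
  have hterm : ∀ p ∈ antidiagonal k,
      (1 / 4 : ℚ) ^ k * (((2 * p.1).choose p.1 : ℚ) * (2 * p.2).choose p.2 * (6 * p.1 + 1) * (6 * p.2 + 1))
        = 36 * ((p.1 : ℚ) * p.2 * (s p.1 * s p.2)) + (6 * k + 1) * (s p.1 * s p.2) := by
    intro p hp
    rw [← mem_antidiagonal.mp hp]
    simp only [scaledCentralBinom, centralBinom_eq_two_mul_choose, one_div_pow]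
    push_cast
    field_simp
    ring
  rw [sum_congr rfl hterm, sum_add_distrib, ← mul_sum, ← mul_sum,
    sum_antidiagonal_fst_mul_snd_mul_scaledCentralBinom, sum_antidiagonal_scaledCentralBinom]
  ring

theorem stmt_4_general (n : ℕ) :
    (∑ k ∈ Finset.range n, (1 / 4 : ℚ) ^ k *
      ∑ j ∈ Finset.range (k + 1),
        ((2 * j).choose j : ℚ) * (2 * (k - j)).choose (k - j) * (6 * j + 1) * (6 * (k - j : ℕ) + 1))
      = n * (3 * n ^ 2 - 3 * n + 2) / 2 := by
  simp only [quarter_pow_mul_sum_choose_mul_eq]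
  induction n with
  | zero => simp
  | succ n ih =>
    rw [sum_range_succ, ih]
    push_cast
    ring

theorem stmt_4 (n : ℕ) (hn : 0 < n) :
    (∑ k ∈ Finset.range n, (1 / 4 : ℚ) ^ k *
      ∑ j ∈ Finset.range (k + 1),
        ((2 * j).choose j : ℚ) * (2 * (k - j)).choose (k - j) * (6 * j + 1) * (6 * (k - j : ℕ) + 1))
      = n * (3 * n ^ 2 - 3 * n + 2) / 2 :=
  stmt_4_general n
end

section
/- For every odd prime p, the sum over k from 0 to p-1 of (1/4)^k * (sum over j from 0 to k of binom(2j,j)*binom(2k-2j,k-j)*(6j+1)*(6k-6j+1)) is congruent to p modulo p^2. -/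
/-!
Writing the central binomial coefficient as `C(2n, n) = (-4)^n * binom(-1/2, n)` turns the
convolutions `∑ C(2j, j) C(2k-2j, k-j)` and `∑ j (k-j) C(2j, j) C(2k-2j, k-j)` into
Chu–Vandermonde sums, equal to `4^k` and `4^k k(k-1)/8`. As
`(6j+1)(6(k-j)+1) = 36 j(k-j) + 6k + 1`, the `k`-th term of the sum is `(9k^2+3k+2)/2`, so the
sum is `p(3p^2-3p+2)/2 = p + 3p^2(p-1)/2` and its difference from `p`, divided by `p^2`, is the
integer `3(p-1)/2`.
-/

open Finset

namespace Ring

variable {R : Type*} [Ring R] [BinomialRing R]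

theorem succ_mul_choose_succ (r : R) (n : ℕ) :
    (n + 1 : R) * choose r (n + 1) = r * choose (r - 1) n := by
  have h := choose_smul_choose r (Nat.le_add_left 1 n)
  rwa [Nat.choose_one_right, nsmul_eq_mul, choose_one_right, Nat.cast_one, Nat.add_sub_cancel,
    Nat.cast_add_one] at h

theorem succ_mul_choose_succ' (r : R) (n : ℕ) :
    (n + 1 : R) * choose r (n + 1) = choose r n * (r - n) := by
  have h := choose_smul_choose r (Nat.le_add_right n 1)
  rwa [Nat.choose_succ_self_right, nsmul_eq_mul, Nat.add_sub_cancel_left, choose_one_right,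
    Nat.cast_add_one] at h

theorem choose_neg_natCast_add_one (m k : ℕ) :
    choose (-(m + 1 : R)) k = (-1) ^ k * ((m + k).choose k : ℕ) := by
  rw [choose_neg, Units.smul_def, show (m + 1 : R) + k - 1 = (m + k : ℕ) by push_cast; abel,
    choose_natCast]
  simp

theorem sum_antidiagonal_mul_mul_choose_mul_choose {R : Type*} [CommRing R] [BinomialRing R]
    (r s : R) (k : ℕ) :
    ∑ ij ∈ antidiagonal (k + 2), (ij.1 * ij.2 : R) * (choose r ij.1 * choose s ij.2)
      = r * s * choose (r + s - 2) k := by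
  rw [Nat.sum_antidiagonal_succ, Nat.sum_antidiagonal_succ',
    show r + s - 2 = (r - 1) + (s - 1) by ring, add_choose_eq k (Commute.all _ _), mul_sum]
  simp only [Nat.cast_zero, zero_mul, mul_zero, zero_add, Nat.cast_add_one]
  refine sum_congr rfl fun ij _ => ?_
  linear_combination (↑ij.2 + 1) * choose s (ij.2 + 1) * succ_mul_choose_succ r ij.1
    + r * choose (r - 1) ij.1 * succ_mul_choose_succ s ij.2

end Ring

namespace Nat

theorem centralBinom_eq_neg_four_pow_mul_choose (n : ℕ) :
    (centralBinom n : ℚ) = (-4) ^ n * Ring.choose (-1 / 2 : ℚ) n := by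
  induction n with
  | zero => simp
  | succ n ih =>
    have hc : ((n + 1 : ℕ) : ℚ) * centralBinom (n + 1) = 2 * (2 * n + 1) * centralBinom n := by
      exact_mod_cast succ_mul_centralBinom_succ n
    have hd := Ring.succ_mul_choose_succ' (-1 / 2 : ℚ) n
    apply mul_left_cancel₀ (show ((n + 1 : ℕ) : ℚ) ≠ 0 by positivity)
    rw [hc, ih]
    push_cast at hd ⊢
    linear_combination -(-4) ^ (n + 1) * hd

theorem sum_antidiagonal_mul_centralBinom_mul (f : ℕ × ℕ → ℚ) (k : ℕ) :
    ∑ ij ∈ antidiagonal k, f ij * (centralBinom ij.1 * centralBinom ij.2)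
      = (-4) ^ k * ∑ ij ∈ antidiagonal k,
          f ij * (Ring.choose (-1 / 2 : ℚ) ij.1 * Ring.choose (-1 / 2 : ℚ) ij.2) := by
  rw [mul_sum]
  refine sum_congr rfl fun ij hij => ?_
  rw [centralBinom_eq_neg_four_pow_mul_choose, centralBinom_eq_neg_four_pow_mul_choose,
    ← mem_antidiagonal.mp hij, pow_add]
  ring

theorem sum_antidiagonal_centralBinom_mul (k : ℕ) :
    ∑ ij ∈ antidiagonal k, (centralBinom ij.1 * centralBinom ij.2 : ℚ) = 4 ^ k := by
  have h := sum_antidiagonal_mul_centralBinom_mul (fun _ => 1) k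
  simp only [one_mul] at h
  rw [h, ← Ring.add_choose_eq k (Commute.all _ _),
    show (-1 / 2 + -1 / 2 : ℚ) = -((0 : ℕ) + 1) by norm_num, Ring.choose_neg_natCast_add_one,
    zero_add, Nat.choose_self, Nat.cast_one, mul_one, ← mul_pow]
  norm_num

theorem sum_antidiagonal_mul_mul_centralBinom_mul (k : ℕ) :
    ∑ ij ∈ antidiagonal k, (ij.1 * ij.2 : ℚ) * (centralBinom ij.1 * centralBinom ij.2)
      = 4 ^ k * (k * (k - 1) / 8) := by
  rw [sum_antidiagonal_mul_centralBinom_mul (fun ij => (ij.1 * ij.2 : ℚ))]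
  obtain _ | _ | k := k
  · simp
  · simp [Finset.Nat.sum_antidiagonal_succ]
  rw [Ring.sum_antidiagonal_mul_mul_choose_mul_choose,
    show (-1 / 2 + -1 / 2 - 2 : ℚ) = -((2 : ℕ) + 1) by norm_num,
    Ring.choose_neg_natCast_add_one, ← Nat.choose_symm_add, Nat.cast_choose_two]
  have h4 : (-4 : ℚ) ^ k * (-1) ^ k = 4 ^ k := by rw [← mul_pow]; norm_num
  push_cast
  linear_combination 2 * ((k : ℚ) + 2) * (k + 1) * h4

end Nat

theorem sum_range_centralBinom_mul_centralBinom_mul_six_mul_add_one (k : ℕ) :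
    ∑ j ∈ range (k + 1),
        (j.centralBinom * (k - j).centralBinom : ℚ) * (6 * j + 1) * (6 * (k - j : ℕ) + 1)
      = 4 ^ k * (9 * k ^ 2 + 3 * k + 2) / 2 := by
  rw [← Nat.sum_antidiagonal_eq_sum_range_succ
    (fun i j => (i.centralBinom * j.centralBinom : ℚ) * (6 * i + 1) * (6 * j + 1))]
  have hsplit : ∀ ij ∈ antidiagonal k,
      (ij.1.centralBinom * ij.2.centralBinom : ℚ) * (6 * ij.1 + 1) * (6 * ij.2 + 1)
        = 36 * ((ij.1 * ij.2 : ℚ) * (ij.1.centralBinom * ij.2.centralBinom))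
          + (6 * k + 1) * (ij.1.centralBinom * ij.2.centralBinom) := by
    intro ij hij
    rw [← mem_antidiagonal.mp hij]
    push_cast
    ring
  rw [sum_congr rfl hsplit, sum_add_distrib, ← mul_sum, ← mul_sum,
    Nat.sum_antidiagonal_mul_mul_centralBinom_mul, Nat.sum_antidiagonal_centralBinom_mul]
  ring

theorem sum_range_quarter_pow_mul_sum_centralBinom_mul_centralBinom_mul (n : ℕ) :
    ∑ k ∈ range n, (1 / 4 : ℚ) ^ k * ∑ j ∈ range (k + 1),
        (j.centralBinom * (k - j).centralBinom : ℚ) * (6 * j + 1) * (6 * (k - j : ℕ) + 1)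
      = n * (3 * n ^ 2 - 3 * n + 2) / 2 := by
  induction n with
  | zero => simp
  | succ n ih =>
    have hquarter : (1 / 4 : ℚ) ^ n * 4 ^ n = 1 := by rw [← mul_pow]; norm_num
    rw [sum_range_succ, ih, sum_range_centralBinom_mul_centralBinom_mul_six_mul_add_one]
    push_cast
    linear_combination (9 * (n : ℚ) ^ 2 + 3 * n + 2) / 2 * hquarter

theorem stmt_6_general (p : ℕ) (hodd : Odd p) :
    Nat.Coprime
      ((((∑ k ∈ Finset.range p, (1 / 4 : ℚ) ^ k *
        ∑ j ∈ Finset.range (k + 1),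
          ((2 * j).choose j : ℚ) * (2 * (k - j)).choose (k - j) * (6 * j + 1) * (6 * (k - j : ℕ) + 1))
        - p) / p ^ 2 : ℚ).den) p := by
  simp only [← Nat.centralBinom_eq_two_mul_choose]
  obtain ⟨m, rfl⟩ := hodd
  rw [sum_range_quarter_pow_mul_sum_centralBinom_mul_centralBinom_mul,
    show _ / _ = ((3 * m : ℕ) : ℚ) by field_simp; push_cast; ring, Rat.den_natCast]
  exact Nat.coprime_one_left _

theorem stmt_6 (p : ℕ) (hp : p.Prime) (hodd : Odd p) :
    Nat.Coprime
      ((((∑ k ∈ Finset.range p, (1 / 4 : ℚ) ^ k *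
        ∑ j ∈ Finset.range (k + 1),
          ((2 * j).choose j : ℚ) * (2 * (k - j)).choose (k - j) * (6 * j + 1) * (6 * (k - j : ℕ) + 1))
        - p) / p ^ 2 : ℚ).den) p :=
  stmt_6_general p hodd
end

section
/- In the ring of formal power series ℚ[[x]], the square of Σ_{j≥0} binom(2j,j) x^j equals Σ_{k≥0} 4^k x^k (i.e., 1/(1-4x)). -/
/-!
The central binomial coefficients satisfy `(n + 1) c (n + 1) = 2 (2n + 1) c n`, which says that
`f = ∑ c n Xⁿ` solves `(1 - 4X) f' = 2 f`. Hence `(1 - 4X) f²` has derivative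
`-4 f² + 2 f (1 - 4X) f' = 0` and constant term `1`, so `f² = (1 - 4X)⁻¹ = ∑ 4ⁿ Xⁿ`.
-/

namespace PowerSeries

variable {R : Type*} [CommRing R]

theorem one_sub_C_mul_X_mul_mk_pow (a : R) : (1 - C a * X) * mk (fun n => a ^ n) = 1 := by
  simpa [rescale_mk, rescale_X, mul_comm] using
    congrArg (rescale a) (mk_one_mul_one_sub_eq_one (S := R))

variable (R) in
noncomputable def centralBinomSeries : R⟦X⟧ := mk fun n => (n.centralBinom : R)

theorem one_sub_four_X_mul_derivative_centralBinomSeries :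
    (1 - 4 * X) * d⁄dX R (centralBinomSeries R) = 2 * centralBinomSeries R := by
  ext n
  rw [← map_ofNat C 4, ← map_ofNat C 2, sub_mul, one_mul, mul_assoc, map_sub, coeff_C_mul,
    coeff_C_mul]
  rcases n with _ | n
  · simp [centralBinomSeries, coeff_derivative, Nat.centralBinom, Nat.choose]
  · have h := congrArg (Nat.cast (R := R)) (Nat.succ_mul_centralBinom_succ (n + 1))
    push_cast at h
    simp only [coeff_succ_X_mul, centralBinomSeries, coeff_derivative, coeff_mk]
    push_cast
    linear_combination h

theorem one_sub_four_X_mul_centralBinomSeries_sq [IsAddTorsionFree R] :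
    (1 - 4 * X) * centralBinomSeries R ^ 2 = 1 := by
  apply derivative.ext
  · have hf := one_sub_four_X_mul_derivative_centralBinomSeries (R := R)
    have h : d⁄dX R (1 - 4 * X) = -4 := by simp [← map_ofNat C 4]
    simp only [Derivation.leibniz, derivative_pow, h, smul_eq_mul, derivative_one]
    linear_combination (2 * centralBinomSeries R) * hf
  · simp [centralBinomSeries]

theorem centralBinomSeries_sq [IsAddTorsionFree R] :
    centralBinomSeries R ^ 2 = mk fun n => 4 ^ n := by
  have hgeom := one_sub_C_mul_X_mul_mk_pow (4 : R)
  rw [map_ofNat] at hgeom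
  exact left_inv_eq_right_inv (by rw [mul_comm]; exact one_sub_four_X_mul_centralBinomSeries_sq)
    hgeom

end PowerSeries

theorem stmt_15 :
    (PowerSeries.mk fun j => ((2 * j).choose j : ℚ)) ^ 2
      = PowerSeries.mk fun k => (4 : ℚ) ^ k := by
  simpa [PowerSeries.centralBinomSeries, Nat.centralBinom_eq_two_mul_choose] using
    PowerSeries.centralBinomSeries_sq (R := ℚ)
end
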